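/- Let D : A → A/J be a ℂ-linear map satisfying the Leibniz rule D(f * g) = π(f)·D(g) + D(f)·π(g) for all f, g ∈ A, let φ(s) = D(δ_s)·π(δ_{s*}), and for s ∈ S define T_s : A/J → A/J by T_s(Φ) = π(δ_s)·Φ·π(δ_{s*}) + φ(s). Then for every s ∈ S, T_s ∘ T_{s*} is the identity map of A/J; consequently, the set B = φ(S) ⊆ A/J satisfies T_s(B) = B for every s ∈ S. -/

import Mathlib

open MonoidAlgebra

/-- An inverse semigroup: a semigroup in which every element `s` has a unique
generalized inverse `s*` with `s * s* * s = s` and `s* * s * s* = s*`. -/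
class InverseSemigroup (S : Type*) extends Semigroup S where
  star : S → S
  star_left : ∀ s : S, s * star s * s = s
  star_right : ∀ s : S, star s * s * star s = star s
  star_unique : ∀ s t : S, s * t * s = s → t * s * t = t → t = star s

variable (S : Type*) [InverseSemigroup S]

/-- The ℂ-linear span in the semigroup algebra `A = MonoidAlgebra ℂ S` of the set
`{δ_{s e t} - δ_{s t} : s, t ∈ S, e ∈ E}`, where `E = {e : e * e = e}` is the set of
idempotents of `S`. -/
noncomputable def J : Submodule ℂ (MonoidAlgebra ℂ S) :=
  Submodule.span ℂ { x | ∃ s t e : S, e * e = e ∧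
    x = single (s * e * t) (1 : ℂ) - single (s * t) (1 : ℂ) }

variable {S}

theorem mul_mem_J (f : MonoidAlgebra ℂ S) {x : MonoidAlgebra ℂ S} (hx : x ∈ J S) :
    f * x ∈ J S := by
  induction hx using Submodule.span_induction with
  | mem x hx =>
    obtain ⟨s, t, e, he, rfl⟩ := hx
    induction f using MonoidAlgebra.induction_linear with
    | zero => simp
    | add a b ha hb => rw [add_mul]; exact (J S).add_mem ha hb
    | single a b =>
      have : (single a b : MonoidAlgebra ℂ S) *
            (single (s * e * t) (1 : ℂ) - single (s * t) (1 : ℂ))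
          = b • (single ((a * s) * e * t) (1 : ℂ) - single ((a * s) * t) (1 : ℂ)) := by
        rw [mul_sub, single_mul_single, single_mul_single, smul_sub, smul_single', smul_single']
        simp [mul_assoc]
      rw [this]
      exact (J S).smul_mem _ (Submodule.subset_span ⟨a * s, t, e, he, rfl⟩)
  | zero => simp
  | add x y hx hy ihx ihy => rw [mul_add]; exact (J S).add_mem ihx ihy
  | smul c x hx ih => rw [mul_smul_comm]; exact (J S).smul_mem _ ih

theorem J_mul_mem (f : MonoidAlgebra ℂ S) {x : MonoidAlgebra ℂ S} (hx : x ∈ J S) :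
    x * f ∈ J S := by
  induction hx using Submodule.span_induction with
  | mem x hx =>
    obtain ⟨s, t, e, he, rfl⟩ := hx
    induction f using MonoidAlgebra.induction_linear with
    | zero => simp
    | add a b ha hb => rw [mul_add]; exact (J S).add_mem ha hb
    | single a b =>
      have : (single (s * e * t) (1 : ℂ) - single (s * t) (1 : ℂ)) *
            (single a b : MonoidAlgebra ℂ S)
          = b • (single (s * e * (t * a)) (1 : ℂ) - single (s * (t * a)) (1 : ℂ)) := by
        rw [sub_mul, single_mul_single, single_mul_single, smul_sub, smul_single', smul_single']
        simp [mul_assoc]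
      rw [this]
      exact (J S).smul_mem _ (Submodule.subset_span ⟨s, t * a, e, he, rfl⟩)
  | zero => simp
  | add x y hx hy ihx ihy => rw [add_mul]; exact (J S).add_mem ihx ihy
  | smul c x hx ih => rw [smul_mul_assoc]; exact (J S).smul_mem _ ih

/-- Multiplication of cosets in the quotient algebra `A ⧸ J`, well defined
since `J` is a two-sided ideal: `(f + J) * (g + J) = f * g + J`. -/
noncomputable instance : Mul (MonoidAlgebra ℂ S ⧸ J S) :=
  ⟨Quotient.map₂' (· * ·) (by
    intro a₁ a₂ h₁ b₁ b₂ h₂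
    have h₁' : a₁ - a₂ ∈ J S := (Submodule.quotientRel_def (J S)).mp h₁
    have h₂' : b₁ - b₂ ∈ J S := (Submodule.quotientRel_def (J S)).mp h₂
    refine (Submodule.quotientRel_def (J S)).mpr ?_
    have : a₁ * b₁ - a₂ * b₂ = a₁ * (b₁ - b₂) + (a₁ - a₂) * b₂ := by
      rw [mul_sub, sub_mul]; abel
    rw [this]
    exact (J S).add_mem (mul_mem_J _ h₂') (J_mul_mem _ h₁'))⟩

variable (S)

/-- The quotient map `π : A → A ⧸ J`, sending `f` to the coset `f + J`. -/
noncomputable def π : MonoidAlgebra ℂ S → MonoidAlgebra ℂ S ⧸ J S := Submodule.Quotient.mk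

theorem π_mul (f g : MonoidAlgebra ℂ S) : π S (f * g) = π S f * π S g := rfl

variable {S}

/-!
In `A ⧸ J` the class of `δ_e` is a two-sided identity for every idempotent `e`. Writing
`p s = π δ_s` and `d s = D δ_s`, the Leibniz rule forces `d e = 0` for idempotents, and applied
to `s * s*` it gives `p s * d s* = -φ s`. In `T_s (T_{s*} Φ)` this cancels the translation by
`φ s`, while the remaining conjugation is by `p (s * s*)`, which acts as the identity. The
Leibniz rule with `(s * t)* = t* * s*` also gives `T_s (φ t) = φ (s * t)`, so `T_s` maps `φ(S)`
into itself, and onto since `T_{s*}` inverts it.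
-/
namespace InverseSemigroup

theorem star_star (s : S) : star (star s) = s :=
  (star_unique _ _ (star_right s) (star_left s)).symm

theorem star_eq_self_of_isIdempotentElem {e : S} (he : IsIdempotentElem e) : star e = e :=
  (star_unique e e (by rw [he.eq, he.eq]) (by rw [he.eq, he.eq])).symm

theorem isIdempotentElem_mul_star (s : S) : IsIdempotentElem (s * star s) := by
  rw [IsIdempotentElem, ← mul_assoc, star_left]

theorem isIdempotentElem_star_mul (s : S) : IsIdempotentElem (star s * s) := by
  rw [IsIdempotentElem, ← mul_assoc, star_right]

-- `f (ef)* e` is another inverse of `ef`, hence equals `(ef)*`; this makes `(ef)*` idempotent,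
-- hence its own inverse, so `ef = (ef)**` is idempotent too.
theorem isIdempotentElem_mul {e f : S} (he : IsIdempotentElem e) (hf : IsIdempotentElem f) :
    IsIdempotentElem (e * f) := by
  have hx : f * star (e * f) * e = star (e * f) := by
    refine star_unique _ _ ?_ ?_
    · calc e * f * (f * star (e * f) * e) * (e * f)
          = e * (f * f) * star (e * f) * (e * e) * f := by simp only [mul_assoc]
        _ = e * f := by rw [he.eq, hf.eq]; simpa only [mul_assoc] using star_left (e * f)
    · calc f * star (e * f) * e * (e * f) * (f * star (e * f) * e)
          = f * star (e * f) * (e * e) * (f * f) * star (e * f) * e := by simp only [mul_assoc]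
        _ = f * star (e * f) * e := by
          rw [he.eq, hf.eq]
          simpa only [mul_assoc] using congr_arg (f * · * e) (star_right (e * f))
  have hxx : IsIdempotentElem (star (e * f)) := by
    calc star (e * f) * star (e * f) = f * star (e * f) * e * (f * star (e * f) * e) := by rw [hx]
      _ = f * (star (e * f) * (e * f) * star (e * f)) * e := by simp only [mul_assoc]
      _ = star (e * f) := by rw [star_right, hx]
  rwa [← star_eq_self_of_isIdempotentElem hxx, star_star] at hxx

theorem commute_of_isIdempotentElem {e f : S} (he : IsIdempotentElem e)
    (hf : IsIdempotentElem f) : Commute e f := by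
  have hef := isIdempotentElem_mul he hf
  have hfe := isIdempotentElem_mul hf he
  have hinv : f * e = star (e * f) := by
    refine star_unique _ _ ?_ ?_
    · calc e * f * (f * e) * (e * f) = e * (f * f) * (e * e) * f := by simp only [mul_assoc]
        _ = e * f := by rw [he.eq, hf.eq]; simpa only [mul_assoc] using hef.eq
    · calc f * e * (e * f) * (f * e) = f * (e * e) * (f * f) * e := by simp only [mul_assoc]
        _ = f * e := by rw [he.eq, hf.eq]; simpa only [mul_assoc] using hfe.eq
  rw [Commute, SemiconjBy, hinv, star_eq_self_of_isIdempotentElem hef]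

theorem star_mul (s t : S) : star (s * t) = star t * star s := by
  have hc := (commute_of_isIdempotentElem (isIdempotentElem_mul_star t)
    (isIdempotentElem_star_mul s)).eq
  refine (star_unique _ _ ?_ ?_).symm
  · calc s * t * (star t * star s) * (s * t) = s * (t * star t * (star s * s)) * t := by
          simp only [mul_assoc]
      _ = s * star s * s * (t * star t * t) := by rw [hc]; simp only [mul_assoc]
      _ = s * t := by rw [star_left, star_left]
  · calc star t * star s * (s * t) * (star t * star s)
          = star t * (star s * s * (t * star t)) * star s := by simp only [mul_assoc]
      _ = star t * t * star t * (star s * s * star s) := by rw [← hc]; simp only [mul_assoc]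
      _ = star t * star s := by rw [star_right, star_right]

variable {R : Type*} [NonUnitalRing R]

def cocycle (p : S →ₙ* R) (d : S → R) (s : S) : R := d s * p (star s)

def affineAction (p : S →ₙ* R) (d : S → R) (s : S) (Φ : R) : R :=
  p s * Φ * p (star s) + cocycle p d s

variable {p : S →ₙ* R} {d : S → R}

theorem derivation_eq_zero_of_isIdempotentElem
    (hpl : ∀ e, IsIdempotentElem e → ∀ x, p e * x = x)
    (hpr : ∀ e, IsIdempotentElem e → ∀ x, x * p e = x)
    (hd : ∀ a b, d (a * b) = p a * d b + d a * p b) {e : S} (he : IsIdempotentElem e) :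
    d e = 0 := by
  have h := hd e e
  rw [he.eq, hpl e he, hpr e he] at h
  exact left_eq_add.mp h

theorem mul_derivation_star_eq_neg_cocycle (hpl : ∀ e, IsIdempotentElem e → ∀ x, p e * x = x)
    (hpr : ∀ e, IsIdempotentElem e → ∀ x, x * p e = x)
    (hd : ∀ a b, d (a * b) = p a * d b + d a * p b) (s : S) :
    p s * d (star s) = -cocycle p d s := by
  have h := hd s (star s)
  rw [derivation_eq_zero_of_isIdempotentElem hpl hpr hd (isIdempotentElem_mul_star s)] at h
  exact eq_neg_of_add_eq_zero_left h.symm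

theorem affineAction_affineAction_star (hpl : ∀ e, IsIdempotentElem e → ∀ x, p e * x = x)
    (hpr : ∀ e, IsIdempotentElem e → ∀ x, x * p e = x)
    (hd : ∀ a b, d (a * b) = p a * d b + d a * p b) (s : S) (Φ : R) :
    affineAction p d s (affineAction p d (star s) Φ) = Φ := by
  have hu := isIdempotentElem_mul_star s
  have hΦ : p s * (p (star s) * Φ * p s) * p (star s) = Φ := by
    rw [show p s * (p (star s) * Φ * p s) * p (star s) = p s * p (star s) * Φ * (p s * p (star s))
      by simp only [mul_assoc], ← map_mul, hpl _ hu, hpr _ hu]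
  have hc : p s * cocycle p d (star s) * p (star s) = -cocycle p d s := by
    rw [cocycle, star_star, show p s * (d (star s) * p s) * p (star s)
      = p s * d (star s) * (p s * p (star s)) by simp only [mul_assoc], ← map_mul, hpr _ hu,
      mul_derivation_star_eq_neg_cocycle hpl hpr hd]
  simp only [affineAction, star_star, mul_add, add_mul]
  rw [hΦ, hc, neg_add_cancel_right]

theorem affineAction_cocycle (hpl : ∀ e, IsIdempotentElem e → ∀ x, p e * x = x)
    (hd : ∀ a b, d (a * b) = p a * d b + d a * p b) (s t : S) :
    affineAction p d s (cocycle p d t) = cocycle p d (s * t) := by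
  have hp : p t * p (star t * star s) = p (star s) := by
    rw [← map_mul, ← mul_assoc, map_mul p (t * star t), hpl _ (isIdempotentElem_mul_star t)]
  calc affineAction p d s (cocycle p d t)
      = p s * d t * (p (star t) * p (star s)) + d s * p (star s) := by
        simp only [affineAction, cocycle, mul_assoc]
    _ = (p s * d t + d s * p t) * p (star t * star s) := by
        rw [add_mul, mul_assoc (d s), hp, map_mul]
    _ = cocycle p d (s * t) := by rw [cocycle, star_mul, hd]

theorem image_affineAction_range_cocycle (hpl : ∀ e, IsIdempotentElem e → ∀ x, p e * x = x)
    (hpr : ∀ e, IsIdempotentElem e → ∀ x, x * p e = x)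
    (hd : ∀ a b, d (a * b) = p a * d b + d a * p b) (s : S) :
    affineAction p d s '' Set.range (cocycle p d) = Set.range (cocycle p d) := by
  refine subset_antisymm ?_ ?_
  · rintro _ ⟨_, ⟨t, rfl⟩, rfl⟩
    exact ⟨s * t, (affineAction_cocycle hpl hd s t).symm⟩
  · rintro _ ⟨t, rfl⟩
    refine ⟨cocycle p d (star s * t), ⟨_, rfl⟩, ?_⟩
    rw [← affineAction_cocycle hpl hd, affineAction_affineAction_star hpl hpr hd]

end InverseSemigroup

open InverseSemigroup

-- Not an instance, so that `*` on `A ⧸ J` keeps elaborating to the `Mul` instance above.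
noncomputable abbrev J.quotientNonUnitalRing : NonUnitalRing (MonoidAlgebra ℂ S ⧸ J S) :=
  (Submodule.Quotient.mk_surjective (J S)).nonUnitalRing _ rfl (fun _ _ => rfl) (fun _ _ => rfl)
    (fun _ => rfl) (fun _ _ => rfl) (fun _ _ => rfl) (fun _ _ => rfl)

theorem π_single_mul_of_isIdempotentElem {e : S} (he : IsIdempotentElem e)
    (x : MonoidAlgebra ℂ S ⧸ J S) : π S (single e (1 : ℂ)) * x = x := by
  obtain ⟨f, rfl⟩ := Submodule.Quotient.mk_surjective _ x
  have key : (J S).mkQ ∘ₗ LinearMap.mulLeft ℂ (single e (1 : ℂ)) = (J S).mkQ := by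
    ext a
    show π S (single e 1 * single a 1) = π S (single a 1)
    rw [single_mul_single, one_mul, π, Submodule.Quotient.eq]
    have h : single (a * star a * e * a) (1 : ℂ) - single (a * star a * a) 1 ∈ J S :=
      Submodule.subset_span ⟨_, _, _, he, rfl⟩
    rwa [(commute_of_isIdempotentElem (isIdempotentElem_mul_star a) he).eq, mul_assoc e,
      star_left] at h
  exact LinearMap.congr_fun key f

theorem mul_π_single_of_isIdempotentElem {e : S} (he : IsIdempotentElem e)
    (x : MonoidAlgebra ℂ S ⧸ J S) : x * π S (single e (1 : ℂ)) = x := by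
  obtain ⟨f, rfl⟩ := Submodule.Quotient.mk_surjective _ x
  have key : (J S).mkQ ∘ₗ LinearMap.mulRight ℂ (single e (1 : ℂ)) = (J S).mkQ := by
    ext a
    show π S (single a 1 * single e 1) = π S (single a 1)
    rw [single_mul_single, one_mul, π, Submodule.Quotient.eq]
    have h : single (a * e * (star a * a)) (1 : ℂ) - single (a * (star a * a)) 1 ∈ J S :=
      Submodule.subset_span ⟨_, _, _, he, rfl⟩
    rwa [mul_assoc a e, (commute_of_isIdempotentElem he (isIdempotentElem_star_mul a)).eq,
      ← mul_assoc, ← mul_assoc, star_left] at h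
  exact LinearMap.congr_fun key f

noncomputable def πSingle : S →ₙ* MonoidAlgebra ℂ S ⧸ J S where
  toFun s := π S (single s 1)
  map_mul' a b := by rw [← π_mul, single_mul_single, one_mul]

/-- with `D`, `φ`, `T` as before, for every `s ∈ S` the composite
`T_s ∘ T_{s*}` is the identity map of `A ⧸ J`; consequently the set `B = φ(S)` satisfies
`T_s(B) = B` for every `s ∈ S`. -/
theorem T_comp_T_star_eq_id
    (D : MonoidAlgebra ℂ S →ₗ[ℂ] MonoidAlgebra ℂ S ⧸ J S)
    (hD : ∀ f g : MonoidAlgebra ℂ S, D (f * g) = π S f * D g + D f * π S g)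
    (φ : S → MonoidAlgebra ℂ S ⧸ J S)
    (hφ : ∀ s : S, φ s = D (single s (1 : ℂ)) * π S (single (InverseSemigroup.star s) (1 : ℂ)))
    (T : S → (MonoidAlgebra ℂ S ⧸ J S) → MonoidAlgebra ℂ S ⧸ J S)
    (hT : ∀ (s : S) (Φ : MonoidAlgebra ℂ S ⧸ J S),
      T s Φ = π S (single s (1 : ℂ)) * Φ * π S (single (InverseSemigroup.star s) (1 : ℂ)) + φ s)
 :
    (∀ (s : S) (Φ : MonoidAlgebra ℂ S ⧸ J S), T s (T (InverseSemigroup.star s) Φ) = Φ) ∧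
    (∀ s : S, T s '' Set.range φ = Set.range φ) := by
  let := J.quotientNonUnitalRing (S := S)
  have hpl : ∀ e : S, IsIdempotentElem e → ∀ x, πSingle e * x = x :=
    fun _ he => π_single_mul_of_isIdempotentElem he
  have hpr : ∀ e : S, IsIdempotentElem e → ∀ x, x * πSingle e = x :=
    fun _ he => mul_π_single_of_isIdempotentElem he
  have hd : ∀ a b : S, D (single (a * b) 1) =
      πSingle a * D (single b 1) + D (single a 1) * πSingle b := fun a b => by
    have h := hD (single a 1) (single b 1)
    rwa [single_mul_single, one_mul] at h
  obtain rfl : φ = cocycle πSingle fun s => D (single s 1) := funext hφ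
  obtain rfl : T = affineAction πSingle fun s => D (single s 1) := funext fun s => funext (hT s)
  exact ⟨affineAction_affineAction_star hpl hpr hd, image_affineAction_range_cocycle hpl hpr hd⟩
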